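/- arXiv:1404.7407 — 3 statements merged into one kernel-verified Lean document; each statement's English description precedes it below -/
import Mathlib

section
/- A weighted digraph is weight-balanced if and only if the symmetric part Sym(L) = (L + Lᵀ)/2 of its out-Laplacian is positive semidefinite. -/
/-!
The quadratic form of `Sym(L)` is that of `L`, namely `∑ᵢⱼ aᵢⱼ xᵢ (xᵢ - xⱼ)`. For a balanced
digraph, exchanging the endpoints of each edge turns twice this into `∑ᵢⱼ aᵢⱼ (xᵢ - xⱼ)² ≥ 0`.
Conversely, `L 𝟙 = 0` makes `𝟙` a null vector of the form, so positive semidefiniteness forces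
`Sym(L) 𝟙 = 0`, i.e. `Lᵀ 𝟙 = 0`; the `i`-th entry of `Lᵀ 𝟙` is out-degree minus in-degree.
-/

open Matrix

namespace Matrix

variable {n : Type*} [Fintype n]

section Laplacian

variable [DecidableEq n] {R : Type*} [CommRing R]

def outLaplacian (A : Matrix n n R) : Matrix n n R :=
  diagonal (fun i => ∑ j, A i j) - A

variable (A : Matrix n n R)

theorem outLaplacian_mulVec_one : outLaplacian A *ᵥ 1 = 0 := by
  ext i
  rw [outLaplacian, sub_mulVec, Pi.sub_apply, mulVec_diagonal]
  simp [mulVec, dotProduct]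

theorem outLaplacian_transpose_mulVec_one :
    (outLaplacian A)ᵀ *ᵥ 1 = fun i => ∑ j, A i j - ∑ j, A j i := by
  ext i
  simp [outLaplacian, mulVec, dotProduct, Finset.sum_sub_distrib, diagonal_apply]

theorem dotProduct_outLaplacian_mulVec (x : n → R) :
    x ⬝ᵥ outLaplacian A *ᵥ x = ∑ i, ∑ j, A i j * (x i * (x i - x j)) := by
  rw [outLaplacian, sub_mulVec, dotProduct_sub]
  simp only [dotProduct, mulVec_diagonal]
  simp only [mulVec, dotProduct, Finset.mul_sum, Finset.sum_mul, ← Finset.sum_sub_distrib]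
  refine Finset.sum_congr rfl fun i _ => Finset.sum_congr rfl fun j _ => ?_
  ring

theorem two_mul_dotProduct_outLaplacian_mulVec (hbal : ∀ i, ∑ j, A i j = ∑ j, A j i)
    (x : n → R) :
    2 * (x ⬝ᵥ outLaplacian A *ᵥ x) = ∑ i, ∑ j, A i j * (x i - x j) ^ 2 := by
  have hswap : ∑ i, ∑ j, A i j * x j ^ 2 = ∑ i, ∑ j, A i j * x i ^ 2 := by
    rw [Finset.sum_comm]
    simp only [← Finset.sum_mul, hbal]
  calc 2 * (x ⬝ᵥ outLaplacian A *ᵥ x)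
      = ∑ i, ∑ j, 2 * (A i j * (x i * (x i - x j))) := by
        simp only [dotProduct_outLaplacian_mulVec, Finset.mul_sum]
    _ = ∑ i, ∑ j, (2 * (A i j * (x i * (x i - x j))) + (A i j * x j ^ 2 - A i j * x i ^ 2)) := by
        simp only [Finset.sum_add_distrib, Finset.sum_sub_distrib, hswap, sub_self, add_zero]
    _ = ∑ i, ∑ j, A i j * (x i - x j) ^ 2 := by
        refine Finset.sum_congr rfl fun i _ => Finset.sum_congr rfl fun j _ => ?_
        ring

theorem dotProduct_outLaplacian_mulVec_nonneg [LinearOrder R] [IsStrictOrderedRing R]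
    (hA : ∀ i j, 0 ≤ A i j) (hbal : ∀ i, ∑ j, A i j = ∑ j, A j i) (x : n → R) :
    0 ≤ x ⬝ᵥ outLaplacian A *ᵥ x := by
  have hsq := two_mul_dotProduct_outLaplacian_mulVec A hbal x
  have hsq_nonneg : 0 ≤ ∑ i, ∑ j, A i j * (x i - x j) ^ 2 :=
    Finset.sum_nonneg fun i _ => Finset.sum_nonneg fun j _ => mul_nonneg (hA i j) (sq_nonneg _)
  linarith

end Laplacian

theorem dotProduct_half_smul_add_transpose_mulVec {K : Type*} [Field K] [NeZero (2 : K)]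
    (M : Matrix n n K) (x : n → K) :
    x ⬝ᵥ ((1 / 2 : K) • (M + Mᵀ)) *ᵥ x = x ⬝ᵥ M *ᵥ x := by
  rw [smul_mulVec, add_mulVec, dotProduct_smul, dotProduct_add, dotProduct_transpose_mulVec,
    smul_eq_mul, ← two_mul, one_div, inv_mul_cancel_left₀ two_ne_zero]

theorem posSemidef_half_smul_add_transpose_iff (M : Matrix n n ℝ) :
    ((1 / 2 : ℝ) • (M + Mᵀ)).PosSemidef ↔ ∀ x, 0 ≤ x ⬝ᵥ M *ᵥ x := by
  have hsymm : ((1 / 2 : ℝ) • (M + Mᵀ)).IsHermitian :=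
    (isHermitian_add_transpose_self M).smul (IsSelfAdjoint.all _)
  simp only [posSemidef_iff_dotProduct_mulVec, hsymm, true_and, star_trivial,
    dotProduct_half_smul_add_transpose_mulVec]

theorem transpose_mulVec_eq_zero_of_posSemidef {M : Matrix n n ℝ}
    (hM : ((1 / 2 : ℝ) • (M + Mᵀ)).PosSemidef) {v : n → ℝ} (hv : M *ᵥ v = 0) :
    Mᵀ *ᵥ v = 0 := by
  have hker := (hM.dotProduct_mulVec_zero_iff v).1 (by
    rw [star_trivial, dotProduct_half_smul_add_transpose_mulVec, hv, dotProduct_zero])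
  simpa [smul_mulVec, add_mulVec, hv] using hker

end Matrix

/-- A weighted digraph (with nonnegative weights) is weight-balanced iff the symmetric
part `Sym(L) = (L + Lᵀ)/2` of its out-Laplacian is positive semidefinite. -/
theorem weight_balanced_iff_sym_laplacian_posSemidef
    {N : ℕ} (A : Matrix (Fin N) (Fin N) ℝ)
    (hA : ∀ i j, 0 ≤ A i j)
    (L : Matrix (Fin N) (Fin N) ℝ)
    (hL : L = Matrix.diagonal (fun i => ∑ j, A i j) - A) :
    (∀ i, (∑ j, A i j) = ∑ j, A j i) ↔ (((1:ℝ)/2) • (L + Lᵀ)).PosSemidef := by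
  obtain rfl : L = outLaplacian A := hL
  constructor
  · intro hbal
    exact (posSemidef_half_smul_add_transpose_iff _).2
      (dotProduct_outLaplacian_mulVec_nonneg A hA hbal)
  · intro hpsd i
    have hdeg := congrFun
      (transpose_mulVec_eq_zero_of_posSemidef hpsd (outLaplacian_mulVec_one A)) i
    rw [outLaplacian_transpose_mulVec_one] at hdeg
    exact sub_eq_zero.1 hdeg
end

section
/- If e : [t₀,∞) → ℝ satisfies ė(t) ≤ α e(t) + c with e(t₀) = 0, α, c, ε > 0, and e(t) < ε on an interval [t₀, t₀ + τ) with τ = (1/α)ln(1 + αε/c), then any sequence of event times defined by successive first hitting times of the threshold ε (with reset of e to 0 at each event) has inter-event times uniformly lower bounded by τ > 0; in particular, the number of events in any finite interval [0, T] is at most ⌈T/τ⌉, so no Zeno behavior occurs. -/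
/-!
Between two events the error obeys `ė ≤ α e + c` starting from `0`, so by Grönwall's inequality
it stays below the solution `(c/α)(exp (α s) - 1)` of the comparison ODE `ẏ = α y + c`. That
solution needs exactly `τ = (1/α) log (1 + α ε / c)` time units to climb from `0` to `ε`, hence
consecutive events are at least `τ` apart and `t k ≥ k τ`.
-/

open Set Real

theorem le_gronwallBound_of_deriv_right_le {f f' : ℝ → ℝ} {δ K ε a b : ℝ}
    (hf : ContinuousOn f (Icc a b)) (hf' : ∀ x ∈ Ico a b, HasDerivWithinAt f (f' x) (Ici x) x)
    (ha : f a ≤ δ) (bound : ∀ x ∈ Ico a b, f' x ≤ K * f x + ε) :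
    ∀ x ∈ Icc a b, f x ≤ gronwallBound δ K ε (x - a) :=
  le_gronwallBound_of_liminf_deriv_right_le hf
    (fun x hx _ hr => (hf' x hx).liminf_right_slope_le hr) ha bound

noncomputable def minInterEventTime (α c ε : ℝ) : ℝ :=
  1 / α * log (1 + α * ε / c)

theorem minInterEventTime_pos {α c ε : ℝ} (hα : 0 < α) (hc : 0 < c) (hε : 0 < ε) :
    0 < minInterEventTime α c ε :=
  mul_pos (one_div_pos.2 hα) (log_pos (lt_add_of_pos_right 1 (by positivity)))

theorem minInterEventTime_le_sub {f f' : ℝ → ℝ} {α c ε a b : ℝ}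
    (hα : 0 < α) (hc : 0 < c) (hε : 0 ≤ ε) (hab : a ≤ b)
    (hf : ∀ x ∈ Icc a b, HasDerivAt f (f' x) x)
    (bound : ∀ x ∈ Icc a b, f' x ≤ α * f x + c) (ha : f a = 0) (hb : f b = ε) :
    minInterEventTime α c ε ≤ b - a := by
  have hgronwall : ε ≤ c / α * (exp (α * (b - a)) - 1) := by
    have := le_gronwallBound_of_deriv_right_le
      (fun x hx => (hf x hx).continuousAt.continuousWithinAt)
      (fun x hx => (hf x (Ico_subset_Icc_self hx)).hasDerivWithinAt) ha.le
      (fun x hx => bound x (Ico_subset_Icc_self hx)) b (right_mem_Icc.2 hab)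
    simpa [gronwallBound_of_K_ne_0 hα.ne', hb] using this
  have hexp : 1 + α * ε / c ≤ exp (α * (b - a)) := by
    rw [div_mul_eq_mul_div, le_div_iff₀ hα] at hgronwall
    rw [← le_sub_iff_add_le', div_le_iff₀ hc]
    linarith
  calc minInterEventTime α c ε ≤ 1 / α * (α * (b - a)) := by
        unfold minInterEventTime
        gcongr
        exact (log_le_iff_le_exp (by positivity)).2 hexp
    _ = b - a := by field_simp

theorem add_nat_mul_le_of_le_sub_succ {t : ℕ → ℝ} {τ : ℝ} (hgap : ∀ k, τ ≤ t (k + 1) - t k) :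
    ∀ k : ℕ, t 0 + k * τ ≤ t k
  | 0 => by simp
  | k + 1 => by
    have := add_nat_mul_le_of_le_sub_succ hgap k
    have := hgap k
    push_cast
    linarith

theorem no_zeno_behavior_general
    (α c ε : ℝ) (hα : 0 < α) (hc : 0 < c) (hε : 0 < ε)
    (τ : ℝ) (hτ : τ = (1 / α) * Real.log (1 + α * ε / c))
    (t : ℕ → ℝ) (ht0 : t 0 = 0) (hmono : ∀ k, t k < t (k + 1))
    (e e' : ℕ → ℝ → ℝ)
    (hreset : ∀ k, e k (t k) = 0)
    (hderiv : ∀ k s, t k ≤ s → s ≤ t (k + 1) → HasDerivAt (e k) (e' k s) s)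
    (hbound : ∀ k s, t k ≤ s → s ≤ t (k + 1) → e' k s ≤ α * e k s + c)
    (hhit : ∀ k, e k (t (k + 1)) = ε) :
    (∀ k, τ ≤ t (k + 1) - t k) ∧
    (∀ T : ℝ, 0 ≤ T →
      {k : ℕ | t k ≤ T}.Finite ∧
      ∀ k : ℕ, 1 ≤ k → t k ≤ T → (k : ℝ) ≤ T / τ) := by
  have hτpos : 0 < τ := hτ ▸ minInterEventTime_pos hα hc hε
  have hgap (k : ℕ) : τ ≤ t (k + 1) - t k :=
    hτ ▸ minInterEventTime_le_sub hα hc hε.le (hmono k).le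
      (fun s hs => hderiv k s hs.1 hs.2) (fun s hs => hbound k s hs.1 hs.2) (hreset k) (hhit k)
  have hindex {k : ℕ} {T : ℝ} (hk : t k ≤ T) : (k : ℝ) ≤ T / τ := by
    rw [le_div_iff₀ hτpos]
    linarith [add_nat_mul_le_of_le_sub_succ hgap k]
  exact ⟨hgap, fun T _ => ⟨(finite_Iic ⌊T / τ⌋₊).subset fun k hk => Nat.le_floor (hindex hk),
    fun k _ hk => hindex hk⟩⟩

/-- Event times defined by successive first hitting times of a threshold `ε`, with the
error reset to `0` at each event and satisfying `ė ≤ α e + c` in between, have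
inter-event times uniformly lower bounded by `τ = (1/α)ln(1 + αε/c) > 0`; in particular
the set of events occurring in any finite interval `[0, T]` is finite with indices at
most `⌈T/τ⌉`, so no Zeno behavior occurs. -/
theorem no_zeno_behavior
    (α c ε : ℝ) (hα : 0 < α) (hc : 0 < c) (hε : 0 < ε)
    (τ : ℝ) (hτ : τ = (1 / α) * Real.log (1 + α * ε / c))
    (t : ℕ → ℝ) (ht0 : t 0 = 0) (hmono : ∀ k, t k < t (k + 1))
    (e e' : ℕ → ℝ → ℝ)
    (hreset : ∀ k, e k (t k) = 0)
    (hnn : ∀ k s, t k ≤ s → s ≤ t (k + 1) → 0 ≤ e k s)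
    (hderiv : ∀ k s, t k ≤ s → s ≤ t (k + 1) → HasDerivAt (e k) (e' k s) s)
    (hbound : ∀ k s, t k ≤ s → s ≤ t (k + 1) → e' k s ≤ α * e k s + c)
    (hhit : ∀ k, e k (t (k + 1)) = ε)
    (hfirst : ∀ k s, t k ≤ s → s < t (k + 1) → e k s < ε) :
    (∀ k, τ ≤ t (k + 1) - t k) ∧
    (∀ T : ℝ, 0 ≤ T →
      {k : ℕ | t k ≤ T}.Finite ∧
      ∀ k : ℕ, 1 ≤ k → t k ≤ T → (k : ℝ) ≤ T / τ) :=
  no_zeno_behavior_general α c ε hα hc hε τ hτ t ht0 hmono e e' hreset hderiv hbound hhit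
end

section
/- Laplacian cross-term bound: for any weighted undirected graph on N nodes with Laplacian L and any vectors x, x̂ ∈ ℝ^N with x̃ = x̂ − x, one has −xᵀLx − 2xᵀLx̃ ≤ (1/2) Σᵢ (4 d_out^i x̃ᵢ² − Σⱼ a_ij (x̂ᵢ − x̂ⱼ)²). -/
/-!
Write `x̃ = x̂ - x`. Since `L` is symmetric, `x̂ᵀLx̂ = xᵀLx + 2xᵀLx̃ + x̃ᵀLx̃`, so the left-hand side
equals `x̃ᵀLx̃ - x̂ᵀLx̂`. Both quadratic forms are halved sums `½ Σᵢⱼ aᵢⱼ (zᵢ - zⱼ)²`, and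
`(x̃ᵢ - x̃ⱼ)² ≤ 2x̃ᵢ² + 2x̃ⱼ²` together with the symmetry of `a` bounds `Σᵢⱼ aᵢⱼ (x̃ᵢ - x̃ⱼ)²`
by `4 Σᵢ dᵢ x̃ᵢ²`.
-/

open Matrix

namespace Matrix

variable {ι R : Type*} [Fintype ι]

theorem IsSymm.dotProduct_mulVec_comm [CommSemiring R] {M : Matrix ι ι R} (hM : M.IsSymm)
    (x y : ι → R) : x ⬝ᵥ (M *ᵥ y) = y ⬝ᵥ (M *ᵥ x) := by
  rw [dotProduct_mulVec, dotProduct_comm, ← mulVec_transpose, hM.eq]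

theorem IsSymm.dotProduct_add_mulVec_add [CommRing R] {M : Matrix ι ι R} (hM : M.IsSymm)
    (x y : ι → R) :
    (x + y) ⬝ᵥ (M *ᵥ (x + y)) = x ⬝ᵥ (M *ᵥ x) + 2 * (x ⬝ᵥ (M *ᵥ y)) + y ⬝ᵥ (M *ᵥ y) := by
  rw [mulVec_add, dotProduct_add, add_dotProduct, add_dotProduct, hM.dotProduct_mulVec_comm y x]
  ring

theorem IsSymm.sum_sum_mul_sub_sq_le [CommRing R] [LinearOrder R] [IsStrictOrderedRing R]
    {A : Matrix ι ι R} (hA : A.IsSymm) (hnn : ∀ i j, 0 ≤ A i j) (t : ι → R) :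
    ∑ i, ∑ j, A i j * (t i - t j) ^ 2 ≤ 4 * ∑ i, (∑ j, A i j) * t i ^ 2 := by
  have hswap : ∑ i, ∑ j, A i j * t j ^ 2 = ∑ i, ∑ j, A i j * t i ^ 2 := by
    rw [Finset.sum_comm]
    simp only [hA.apply]
  calc ∑ i, ∑ j, A i j * (t i - t j) ^ 2
      ≤ ∑ i, ∑ j, (2 * (A i j * t i ^ 2) + 2 * (A i j * t j ^ 2)) := by
        refine Finset.sum_le_sum fun i _ => Finset.sum_le_sum fun j _ => ?_
        have hsq : (t i - t j) ^ 2 ≤ 2 * t i ^ 2 + 2 * t j ^ 2 := by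
          nlinarith [sq_nonneg (t i + t j)]
        nlinarith [mul_le_mul_of_nonneg_left hsq (hnn i j)]
    _ = 4 * ∑ i, (∑ j, A i j) * t i ^ 2 := by
        simp only [Finset.sum_add_distrib, ← Finset.mul_sum, hswap, Finset.sum_mul]
        ring

variable [DecidableEq ι]

def weightedLaplacian [AddCommGroup R] (A : Matrix ι ι R) : Matrix ι ι R :=
  diagonal (fun i => ∑ j, A i j) - A

theorem IsSymm.weightedLaplacian [AddCommGroup R] {A : Matrix ι ι R} (hA : A.IsSymm) :
    A.weightedLaplacian.IsSymm :=
  (isSymm_diagonal _).sub hA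

theorem weightedLaplacian_mulVec_apply [CommRing R] (A : Matrix ι ι R) (z : ι → R) (i : ι) :
    (A.weightedLaplacian *ᵥ z) i = ∑ j, A i j * (z i - z j) := by
  rw [Matrix.weightedLaplacian, sub_mulVec, Pi.sub_apply, mulVec_diagonal, Finset.sum_mul,
    mulVec, dotProduct, ← Finset.sum_sub_distrib]
  simp only [mul_sub]

theorem IsSymm.two_mul_dotProduct_weightedLaplacian_mulVec [CommRing R] {A : Matrix ι ι R}
    (hA : A.IsSymm) (z : ι → R) :
    2 * (z ⬝ᵥ (A.weightedLaplacian *ᵥ z)) = ∑ i, ∑ j, A i j * (z i - z j) ^ 2 := by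
  have hform : z ⬝ᵥ (A.weightedLaplacian *ᵥ z) = ∑ i, ∑ j, A i j * (z i * (z i - z j)) := by
    simp only [dotProduct, weightedLaplacian_mulVec_apply, Finset.mul_sum, mul_left_comm]
  have hswap : ∑ i, ∑ j, A i j * (z i * (z i - z j)) = ∑ i, ∑ j, A i j * (z j * (z j - z i)) := by
    rw [Finset.sum_comm]
    simp only [hA.apply]
  rw [two_mul, hform]
  nth_rewrite 2 [hswap]
  simp only [← Finset.sum_add_distrib]
  exact Finset.sum_congr rfl fun i _ => Finset.sum_congr rfl fun j _ => by ring

end Matrix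

/-- Laplacian cross-term bound: for a weighted undirected graph with Laplacian
`L = D − A` and any `x, x̂ ∈ ℝ^N` with `x̃ = x̂ − x`,
`−xᵀLx − 2xᵀLx̃ ≤ (1/2) Σᵢ (4 dᵢ x̃ᵢ² − Σⱼ aᵢⱼ (x̂ᵢ − x̂ⱼ)²)`. -/
theorem laplacian_cross_term_bound
    {N : ℕ} (A : Matrix (Fin N) (Fin N) ℝ)
    (hsym : ∀ i j, A i j = A j i) (hnn : ∀ i j, 0 ≤ A i j)
    (d : Fin N → ℝ) (hd : ∀ i, d i = ∑ j, A i j)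
    (L : Matrix (Fin N) (Fin N) ℝ) (hL : L = Matrix.diagonal d - A)
    (x xh : Fin N → ℝ) :
    -(x ⬝ᵥ (L *ᵥ x)) - 2 * (x ⬝ᵥ (L *ᵥ (xh - x)))
      ≤ (1 / 2) * ∑ i, (4 * d i * (xh i - x i) ^ 2
          - ∑ j, A i j * (xh i - xh j) ^ 2) := by
  have hA : A.IsSymm := IsSymm.ext fun i j => hsym j i
  obtain rfl : d = fun i => ∑ j, A i j := funext hd
  obtain rfl : L = A.weightedLaplacian := hL
  have hsplit := hA.weightedLaplacian.dotProduct_add_mulVec_add x (xh - x)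
  rw [add_sub_cancel] at hsplit
  have hxh := hA.two_mul_dotProduct_weightedLaplacian_mulVec xh
  have hdiff := hA.two_mul_dotProduct_weightedLaplacian_mulVec (xh - x)
  have hbound := hA.sum_sum_mul_sub_sq_le hnn (xh - x)
  simp only [Pi.sub_apply] at hdiff hbound
  have hrhs : ∑ i, (4 * (∑ j, A i j) * (xh i - x i) ^ 2 - ∑ j, A i j * (xh i - xh j) ^ 2)
      = 4 * ∑ i, (∑ j, A i j) * (xh i - x i) ^ 2 - ∑ i, ∑ j, A i j * (xh i - xh j) ^ 2 := by
    rw [Finset.sum_sub_distrib, Finset.mul_sum]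
    simp only [mul_assoc]
  rw [hrhs]
  linarith
end
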